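/- Let u : 2^E → ℝ be an ordinally w-concave function on the subsets of a finite set E. Then for any U ⊆ E with C_u^{-1}(U) ≠ ∅ there uniquely exists a set U⁺ ⊆ E such that C_u^{-1}(U) = [U, U⁺] = {X : U ⊆ X ⊆ U⁺}, i.e., C_u^{-1}(U) is an interval of 2^E with least element U and greatest element U⁺. -/
import Mathlib


namespace OrdConc

variable {E : Type*} [DecidableEq E]

/-- Membership of an optional element in a finite set: the extra symbol `∅`
(encoded as `none`) always counts as a member of `S ∪ {∅}`. -/
def mem? (x : Option E) (S : Finset E) : Prop :=
  ∀ a : E, x = some a → a ∈ S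

/-- `X − x` (no-op when `x = none`, i.e. the symbol `∅`). -/
def rem (X : Finset E) (x : Option E) : Finset E :=
  x.elim X fun a => X.erase a

/-- `X + x` (no-op when `x = none`, i.e. the symbol `∅`). -/
def add (X : Finset E) (x : Option E) : Finset E :=
  x.elim X fun a => insert a X

/-- `X − x + x'`. -/
def move (X : Finset E) (x x' : Option E) : Finset E :=
  add (rem X x) x'

/-- Ordinal concavity (Definition 1). -/
def OrdinalConcave (u : Finset E → ℝ) : Prop :=
  ∀ X X' : Finset E, ∀ x ∈ X \ X', ∃ x' : Option E, mem? x' (X' \ X) ∧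
    (u X < u (move X (some x) x') ∨
     u X' < u (move X' x' (some x)) ∨
     (u X = u (move X (some x) x') ∧ u X' = u (move X' x' (some x))))

/-- Ordinal weak-concavity (Definition 2). -/
def OrdinalWeakConcave (u : Finset E → ℝ) : Prop :=
  ∀ X X' : Finset E, X ≠ X' → ∃ x x' : Option E, x ≠ x' ∧
    mem? x (X \ X') ∧ mem? x' (X' \ X) ∧
    (u X < u (move X x x') ∨
     u X' < u (move X' x' x) ∨
     (u X = u (move X x x') ∧ u X' = u (move X' x' x)))

/-- An M♮-convex set (family) of subsets of `E`. -/
def MnatConvex (F : Set (Finset E)) : Prop :=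
  ∀ X ∈ F, ∀ X' ∈ F, ∀ x ∈ X \ X', ∃ x' : Option E, mem? x' (X' \ X) ∧
    move X (some x) x' ∈ F ∧ move X' x' (some x) ∈ F

/-- The simultaneous exchange property (†). -/
def Dagger (F : Set (Finset E)) : Prop :=
  ∀ X ∈ F, ∀ X' ∈ F, X ≠ X' → ∃ x x' : Option E, x ≠ x' ∧
    mem? x (X \ X') ∧ mem? x' (X' \ X) ∧
    move X x x' ∈ F ∧ move X' x' x ∈ F

/-- `D*_u`, the family of global maximizers of `u`. -/
def Dstar (u : Finset E → ℝ) : Set (Finset E) :=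
  {X | ∀ Z : Finset E, u Z ≤ u X}

/-- The neighborhood `N(X)`. -/
def Nbhd [Fintype E] (X : Finset E) : Set (Finset E) :=
  {Z | ∃ x x' : Option E, mem? x X ∧ mem? x' (Finset.univ \ X) ∧ Z = move X x x'}

/-- The interval `[X, Y]` in `2^E`. -/
def Interval (X Y : Finset E) : Set (Finset E) :=
  {Z | X ⊆ Z ∧ Z ⊆ Y}

/-- `C_u(X,Y)`, the maximizers of `u` over the interval `[X,Y]`. -/
def CuI (u : Finset E → ℝ) (X Y : Finset E) : Set (Finset E) :=
  {Z | Z ∈ Interval X Y ∧ ∀ W ∈ Interval X Y, u W ≤ u Z}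

/-- `C_u(X)`, the maximizers of `u` among all subsets of `X`. -/
def Cu (u : Finset E → ℝ) (X : Finset E) : Set (Finset E) :=
  {Z | Z ⊆ X ∧ ∀ W ⊆ X, u W ≤ u Z}

/-- Cardinality of the symmetric difference `X Δ Z`. -/
def sdCard (X Z : Finset E) : ℕ := (X \ Z ∪ Z \ X).card

/-- The strict lexicographic order on `ℝ²`. -/
def lexLt (p q : ℝ × ℝ) : Prop := p.1 < q.1 ∨ (p.1 = q.1 ∧ p.2 < q.2)

/-- The (non-strict) lexicographic order on `ℝ²`. -/
def lexLe (p q : ℝ × ℝ) : Prop := lexLt p q ∨ p = q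


lemma rem_subset (X : Finset E) (x : Option E) : rem X x ⊆ X := by
  cases x with
  | none => exact subset_rfl
  | some a => exact Finset.erase_subset a X

lemma cu_mono {u : Finset E → ℝ} {U X Y : Finset E} (h : U ∈ Cu u X)
    (hUY : U ⊆ Y) (hYX : Y ⊆ X) : U ∈ Cu u Y :=
  ⟨hUY, fun W hW => h.2 W (hW.trans hYX)⟩

lemma sdCard_move_lt {W U : Finset E} {x x' : Option E} (hxx' : x ≠ x')
    (hx : mem? x (W \ U)) (hx' : mem? x' (U \ W)) :
    sdCard (move W x x') U < sdCard W U := by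
  apply Finset.card_lt_card
  constructor
  · intro c hc
    simp only [Finset.mem_union, Finset.mem_sdiff] at hc ⊢
    cases x with
    | none =>
      cases x' with
      | none => exact absurd rfl hxx'
      | some b =>
        have hb := hx' b rfl
        simp only [Finset.mem_sdiff] at hb
        simp only [move, add, rem, Option.elim, Finset.mem_insert] at hc
        rcases hc with ⟨hc1, hc2⟩ | ⟨hc1, hc2⟩
        · rcases hc1 with rfl | hc1
          · exact absurd hb.1 hc2
          · exact Or.inl ⟨hc1, hc2⟩
        · exact Or.inr ⟨hc1, fun h => hc2 (Or.inr h)⟩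
    | some a =>
      have ha := hx a rfl
      simp only [Finset.mem_sdiff] at ha
      cases x' with
      | none =>
        simp only [move, add, rem, Option.elim, Finset.mem_erase] at hc
        rcases hc with ⟨⟨_, hc1⟩, hc2⟩ | ⟨hc1, hc2⟩
        · exact Or.inl ⟨hc1, hc2⟩
        · rcases eq_or_ne c a with rfl | hca
          · exact Or.inl ⟨ha.1, ha.2⟩
          · exact Or.inr ⟨hc1, fun h => hc2 ⟨hca, h⟩⟩
      | some b =>
        have hb := hx' b rfl
        simp only [Finset.mem_sdiff] at hb
        simp only [move, add, rem, Option.elim, Finset.mem_insert, Finset.mem_erase] at hc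
        rcases hc with ⟨hc1, hc2⟩ | ⟨hc1, hc2⟩
        · rcases hc1 with rfl | ⟨_, hc1⟩
          · exact absurd hb.1 hc2
          · exact Or.inl ⟨hc1, hc2⟩
        · rcases eq_or_ne c a with rfl | hca
          · exact absurd hc1 ha.2
          · exact Or.inr ⟨hc1, fun h => hc2 (Or.inr ⟨hca, h⟩)⟩
  · intro hsub
    cases x with
    | none =>
      cases x' with
      | none => exact absurd rfl hxx'
      | some b =>
        have hb := hx' b rfl
        simp only [Finset.mem_sdiff] at hb
        have hbmem : b ∈ W \ U ∪ U \ W := by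
          simp [Finset.mem_union, Finset.mem_sdiff, hb.1, hb.2]
        have h2 := hsub hbmem
        simp [move, add, rem, Option.elim, hb.1] at h2
    | some a =>
      have ha := hx a rfl
      simp only [Finset.mem_sdiff] at ha
      have hamem : a ∈ W \ U ∪ U \ W := by
        simp [Finset.mem_union, Finset.mem_sdiff, ha.1, ha.2]
      have h2 := hsub hamem
      cases x' with
      | none =>
        simp [move, add, rem, Option.elim, ha.2] at h2
      | some b =>
        have hb := hx' b rfl
        simp only [Finset.mem_sdiff] at hb
        have hab : a ≠ b := fun h => ha.2 (h ▸ hb.1)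
        simp [move, add, rem, Option.elim, ha.2, hab] at h2

lemma move_subset_union {W U : Finset E} {x x' : Option E}
    (hx' : mem? x' (U \ W)) : move W x x' ⊆ W ∪ U := by
  cases x' with
  | none => exact (rem_subset W x).trans Finset.subset_union_left
  | some b =>
    have hb := hx' b rfl
    simp only [Finset.mem_sdiff] at hb
    intro c hc
    simp only [move, add, Option.elim, Finset.mem_insert] at hc
    rcases hc with rfl | hc
    · exact Finset.mem_union_right _ hb.1
    · exact Finset.mem_union_left _ (rem_subset W x hc)

lemma cu_union {u : Finset E → ℝ} (hu : OrdinalWeakConcave u) {U X X' : Finset E}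
    (hX : U ∈ Cu u X) (hX' : U ∈ Cu u X') : U ∈ Cu u (X ∪ X') := by
  have key : ∀ n : ℕ, ∀ W : Finset E, sdCard W U ≤ n → W ⊆ X ∪ X' → u W ≤ u U := by
    intro n
    induction n with
    | zero =>
      intro W hcard _
      have : W \ U ∪ U \ W = ∅ := Finset.card_eq_zero.mp (Nat.le_zero.mp hcard)
      rw [Finset.union_eq_empty] at this
      have hW : W = U := Finset.Subset.antisymm
        (Finset.sdiff_eq_empty_iff_subset.mp this.1)
        (Finset.sdiff_eq_empty_iff_subset.mp this.2)
      rw [hW]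
    | succ n ih =>
      intro W hcard hsub
      rcases eq_or_ne W U with rfl | hWU
      · exact le_rfl
      obtain ⟨x, x', hxx', hx, hx', hcases⟩ := hu W U hWU
      have hlt := sdCard_move_lt hxx' hx hx'
      have hmsub : move W x x' ⊆ X ∪ X' := by
        refine (move_subset_union hx').trans ?_
        exact Finset.union_subset hsub (hX.1.trans Finset.subset_union_left)
      have hih : u (move W x x') ≤ u U := ih _ (by omega) hmsub
      rcases hcases with h1 | h2 | ⟨h3, _⟩
      · exact le_of_lt (lt_of_lt_of_le h1 hih)
      · exfalso
        cases x with
        | none =>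
          have : move U x' none ⊆ X := (rem_subset U x').trans hX.1
          exact absurd (hX.2 _ this) (not_le.mpr h2)
        | some a =>
          have ha := hx a rfl
          simp only [Finset.mem_sdiff] at ha
          have haX : a ∈ X ∪ X' := hsub ha.1
          have hins : move U x' (some a) ⊆ insert a U := by
            intro c hc
            simp only [move, add, Option.elim, Finset.mem_insert] at hc ⊢
            rcases hc with rfl | hc
            · exact Or.inl rfl
            · exact Or.inr (rem_subset U x' hc)
          rcases Finset.mem_union.mp haX with haX | haX'
          · have : move U x' (some a) ⊆ X :=
              hins.trans (Finset.insert_subset haX hX.1)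
            exact absurd (hX.2 _ this) (not_le.mpr h2)
          · have : move U x' (some a) ⊆ X' :=
              hins.trans (Finset.insert_subset haX' hX'.1)
            exact absurd (hX'.2 _ this) (not_le.mpr h2)
      · rw [h3]; exact hih
  exact ⟨hX.1.trans Finset.subset_union_left, fun W hW => key _ W le_rfl hW⟩

theorem inverse_choice_is_interval {E : Type*} [DecidableEq E] [Fintype E]
    (u : Finset E → ℝ) (hu : OrdinalWeakConcave u)
    (U : Finset E) (hne : ∃ X : Finset E, U ∈ Cu u X) :
    ∃! Up : Finset E, ∀ X : Finset E, U ∈ Cu u X ↔ (U ⊆ X ∧ X ⊆ Up) := by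
  classical
  obtain ⟨X0, hX0⟩ := hne
  have hUU : U ∈ Cu u U := cu_mono hX0 subset_rfl hX0.1
  set F : Finset (Finset E) := Finset.univ.filter (fun X => U ∈ Cu u X) with hF
  set Up : Finset E := U ∪ F.sup id with hUpdef
  have hmemF : ∀ X ∈ F, U ∈ Cu u X := fun X hX => (Finset.mem_filter.mp hX).2
  have hUpCu : U ∈ Cu u Up := by
    rw [hUpdef]
    refine Finset.sup_induction (p := fun S => U ∈ Cu u (U ∪ S)) ?_ ?_ ?_
    · simpa using hUU
    · intro a ha b hb
      have h := cu_union hu ha hb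
      have heq : (U ∪ a) ∪ (U ∪ b) = U ∪ a ⊔ b := by
        ext c; simp [Finset.mem_union]; tauto
      rwa [heq] at h
    · intro X hX
      have h := hmemF X hX
      have heq : U ∪ id X = X := Finset.union_eq_right.mpr h.1
      rw [heq]; exact h
  have hiff : ∀ X : Finset E, U ∈ Cu u X ↔ (U ⊆ X ∧ X ⊆ Up) := by
    intro X
    constructor
    · intro h
      have hXF : X ∈ F := Finset.mem_filter.mpr ⟨Finset.mem_univ _, h⟩
      have hsub : X ⊆ F.sup id := Finset.le_sup (f := id) hXF
      exact ⟨h.1, hsub.trans Finset.subset_union_right⟩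
    · intro h
      exact cu_mono hUpCu h.1 h.2
  refine ⟨Up, hiff, ?_⟩
  intro V hV
  have hUV : U ⊆ V := hX0.1.trans ((hV X0).mp hX0).2
  have h1 : V ⊆ Up := ((hiff V).mp ((hV V).mpr ⟨hUV, subset_rfl⟩)).2
  have h2 : Up ⊆ V := ((hV Up).mp hUpCu).2
  exact Finset.Subset.antisymm h1 h2
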